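/- Fix residuals e_i = y_i − x_iᵀβ̂_n and suppose not all vectors e_i·x_i are zero. Over all sampling-probability vectors (π_1,…,π_n) with π_i > 0 and Σ_i π_i = 1, the quantity σ_b²(π) = (1/n²)·Σ_{i=1}^n π_i⁻¹·‖x_i‖²·e_i² satisfies σ_b²(π) ≥ ( (1/n)·Σ_{i=1}^n ‖x_i‖·|e_i| )², with equality attained at π_i^e = ‖x_i‖·|e_i| / Σ_{j=1}^n ‖x_j‖·|e_j| (setting π_i^e accordingly on indices with e_i x_i ≠ 0). In particular, min_π σ_b²(π) = ( (1/n)·Σ_i ‖e_i x_i‖ )². -/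

import Mathlib

open Matrix

/-- Euclidean norm of a vector in ℝ^d. -/
noncomputable def euclNorm {d : ℕ} (v : Fin d → ℝ) : ℝ := Real.sqrt (∑ i, v i ^ 2)

/-!
Writing `a_i = ‖x_i‖·|e_i|`, the summands of `σ_b²(π)` are `a_i² / π_i`, so the lower bound is
the Cauchy–Schwarz inequality `(∑ a_i)² ≤ (∑ π_i)(∑ a_i² / π_i)` with `∑ π_i = 1`. At
`π_i = a_i / ∑ a_j` every summand becomes `a_i · ∑ a_j`, which gives equality.
-/

lemma euclNorm_sq {d : ℕ} (v : Fin d → ℝ) : euclNorm v ^ 2 = ∑ i, v i ^ 2 :=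
  Real.sq_sqrt (Finset.sum_nonneg fun i _ => sq_nonneg (v i))

section WeightedSum

variable {ι 𝕜 : Type*} [Field 𝕜] [LinearOrder 𝕜] [IsStrictOrderedRing 𝕜] (s : Finset ι)

lemma sq_sum_le_sum_inv_mul_sq_of_sum_eq_one (a : ι → 𝕜) {w : ι → 𝕜}
    (hw : ∀ i ∈ s, 0 < w i) (hw_sum : ∑ i ∈ s, w i = 1) :
    (∑ i ∈ s, a i) ^ 2 ≤ ∑ i ∈ s, (w i)⁻¹ * a i ^ 2 := by
  simpa only [hw_sum, div_eq_inv_mul, inv_one, one_mul] using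
    Finset.sq_sum_div_le_sum_sq_div s a hw

lemma sum_inv_div_sum_mul_sq {a : ι → 𝕜} (ha : ∀ i ∈ s, 0 ≤ a i) :
    ∑ i ∈ s, (a i / ∑ j ∈ s, a j)⁻¹ * a i ^ 2 = (∑ i ∈ s, a i) ^ 2 := by
  set S := ∑ j ∈ s, a j
  have term_eq : ∀ i ∈ s, (a i / S)⁻¹ * a i ^ 2 = S * a i := by
    intro i hi
    rcases (ha i hi).eq_or_lt with hai | hai
    · simp [← hai]
    · have hS : 0 < S := hai.trans_le (Finset.single_le_sum ha hi)
      field_simp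
  rw [Finset.sum_congr rfl term_eq, ← Finset.mul_sum, sq]

end WeightedSum

theorem stmt16_general {n d : ℕ}
    (x : Fin n → Fin d → ℝ)
    (e : Fin n → ℝ)
    (sb2 : (Fin n → ℝ) → ℝ)
    (hsb2 : ∀ w, sb2 w = ((n : ℝ) ^ 2)⁻¹ * ∑ i, (w i)⁻¹ * (∑ k, x i k ^ 2) * e i ^ 2)
    (πe : Fin n → ℝ)
    (hπe : ∀ i, πe i = euclNorm (x i) * |e i| / ∑ j, euclNorm (x j) * |e j|) :
    (∀ w : Fin n → ℝ, (∀ i, 0 < w i) → (∑ i, w i) = 1 →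
        ((n : ℝ)⁻¹ * ∑ i, euclNorm (x i) * |e i|) ^ 2 ≤ sb2 w) ∧
      sb2 πe = ((n : ℝ)⁻¹ * ∑ i, euclNorm (x i) * |e i|) ^ 2 := by
  set a : Fin n → ℝ := fun i => euclNorm (x i) * |e i|
  have hsb2_a : ∀ w, sb2 w = ((n : ℝ) ^ 2)⁻¹ * ∑ i, (w i)⁻¹ * a i ^ 2 := fun w => by
    simp only [hsb2, a, mul_pow, euclNorm_sq, sq_abs, mul_assoc]
  have ha : ∀ i ∈ Finset.univ, 0 ≤ a i := fun i _ =>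
    mul_nonneg (Real.sqrt_nonneg _) (abs_nonneg _)
  rw [mul_pow, inv_pow]
  refine ⟨fun w hw hw_sum => ?_, ?_⟩
  · rw [hsb2_a]
    gcongr
    exact sq_sum_le_sum_inv_mul_sq_of_sum_eq_one _ a (fun i _ => hw i) hw_sum
  · rw [hsb2_a, funext hπe, sum_inv_div_sum_mul_sq _ ha]

/-- Cauchy–Schwarz minimization at the core of Corollary 1: over all
sampling-probability vectors `π` with positive entries summing to one,
`σ_b²(π) = (1/n²)Σ_i π_i⁻¹‖x_i‖²e_i² ≥ ((1/n)Σ_i ‖x_i‖|e_i|)²`, with equality attained at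
`π_i^e = ‖x_i‖|e_i|/Σ_j ‖x_j‖|e_j|`. In particular
`min_π σ_b²(π) = ((1/n)Σ_i ‖e_i x_i‖)²`. -/
theorem stmt16 {n d : ℕ} (hn : 1 ≤ n) (hd : 1 ≤ d)
    (x : Fin n → Fin d → ℝ) (y : Fin n → ℝ)
    (Sn : Matrix (Fin d) (Fin d) ℝ)
    (hSn : Sn = (n : ℝ)⁻¹ • ∑ i, vecMulVec (x i) (x i))
    (hpd : Sn.PosDef)
    (βhat : Fin d → ℝ) (hβ : βhat = Sn⁻¹ *ᵥ ((n : ℝ)⁻¹ • ∑ i, y i • x i))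
    (e : Fin n → ℝ) (he : ∀ i, e i = y i - ∑ k, x i k * βhat k)
    (hne : ∃ i, e i • x i ≠ 0)
    (sb2 : (Fin n → ℝ) → ℝ)
    (hsb2 : ∀ w, sb2 w = ((n : ℝ) ^ 2)⁻¹ * ∑ i, (w i)⁻¹ * (∑ k, x i k ^ 2) * e i ^ 2)
    (πe : Fin n → ℝ)
    (hπe : ∀ i, πe i = euclNorm (x i) * |e i| / ∑ j, euclNorm (x j) * |e j|) :
    (∀ w : Fin n → ℝ, (∀ i, 0 < w i) → (∑ i, w i) = 1 →
        ((n : ℝ)⁻¹ * ∑ i, euclNorm (x i) * |e i|) ^ 2 ≤ sb2 w) ∧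
      sb2 πe = ((n : ℝ)⁻¹ * ∑ i, euclNorm (x i) * |e i|) ^ 2 :=
  stmt16_general x e sb2 hsb2 πe hπe
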